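/- arXiv:1702.07922 — 3 statements merged into one kernel-verified Lean document; each statement's English description precedes it below -/
import Mathlib

section
/- Let μ be an instance of REP over Σ with words u_start, u_end and rules w_i → w'_i for 1 ≤ i ≤ n. A substitution h is an overlapping solution of α_μ = β_μ if and only if there exist words v_1,…,v_n such that: (1) for each 1 ≤ i ≤ n, v_i is a prefix of h(x_i), |w_i| ≤ |v_i|, and h(x_i) w_i is a prefix of the infinite periodic word v_i^ω (equivalently, of v_i^m for all sufficiently large m); (2) v_1 = # u_start, and v_i = y_{i−1} w'_{i−1} for 2 ≤ i ≤ n; (3) y_n w'_n h(x_{n+1}) = h(x_{n+1}) # u_end; where, for 1 ≤ i ≤ n, y_i denotes the suffix of h(x_i) of length |v_i| − |w_i|. -/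
/-!
Framework for REP (Rewriting with Programmed Rules) and the associated word
equations α_μ = β_μ.  Constants: `Option A` models Σ ∪ {#}, where `none` is the
fresh letter `#` and `some a` embeds a ∈ Σ.  Variables are modelled by `ℕ`
(the variable x_i is `i`).
-/

namespace REP

/-- `u_end` is obtained from `u_start` by applying each of the `n` rules
`w i → w' i` (for `i = 1, …, n`) once, in order, each application replacing one
occurrence of `w i` by `w' i`. -/
def SatisfiesREP {A : Type} (n : ℕ) (ustart uend : List A) (w w' : ℕ → List A) : Prop :=
  ∃ u : ℕ → List A, u 0 = ustart ∧ u n = uend ∧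
    ∀ i, 1 ≤ i → i ≤ n → ∃ s t : List A,
      u (i - 1) = s ++ w i ++ t ∧ u i = s ++ w' i ++ t

/-- Apply a substitution (identity on constants) to a pattern. -/
def applySub {A : Type} (h : ℕ → List (Option A)) : List (Option A ⊕ ℕ) → List (Option A)
  | [] => []
  | Sum.inl a :: rest => a :: applySub h rest
  | Sum.inr x :: rest => h x ++ applySub h rest

/-- Embed a constant word over Σ into patterns over Σ ∪ {#}. -/
def lift {A : Type} (u : List A) : List (Option A ⊕ ℕ) := u.map (fun a => Sum.inl (some a))

/-- Embed a constant word over Σ into words over Σ ∪ {#}. -/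
def liftW {A : Type} (u : List A) : List (Option A) := u.map some

/-- The fresh letter `#` as a pattern symbol. -/
def hash {A : Type} : Option A ⊕ ℕ := Sum.inl none

/-- `x_1 w_1 x_2 w_2 ⋯ x_n w_n`. -/
def blocks {A : Type} (w : ℕ → List A) : ℕ → List (Option A ⊕ ℕ)
  | 0 => []
  | n + 1 => blocks w n ++ (Sum.inr (n + 1) :: lift (w (n + 1)))

/-- α_μ = `x_1 w_1 x_2 w_2 ⋯ x_n w_n x_{n+1} # u_end`. -/
def alphaMu {A : Type} (n : ℕ) (uend : List A) (w : ℕ → List A) : List (Option A ⊕ ℕ) :=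
  blocks w n ++ [Sum.inr (n + 1), hash] ++ lift uend

/-- β_μ = `# u_start x_1 w'_1 x_2 w'_2 ⋯ x_n w'_n x_{n+1}`. -/
def betaMu {A : Type} (n : ℕ) (ustart : List A) (w' : ℕ → List A) : List (Option A ⊕ ℕ) :=
  hash :: lift ustart ++ blocks w' n ++ [Sum.inr (n + 1)]

/-- `x_1 w_1 ⋯ x_i w_i`. -/
def alphaPrefix {A : Type} (w : ℕ → List A) (i : ℕ) : List (Option A ⊕ ℕ) := blocks w i

/-- `# u_start x_1 w'_1 ⋯ w'_{i-1} x_i`. -/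
def betaPrefix {A : Type} (ustart : List A) (w' : ℕ → List A) (i : ℕ) :
    List (Option A ⊕ ℕ) :=
  hash :: lift ustart ++ blocks w' (i - 1) ++ [Sum.inr i]

/-- `h` is a solution of the equation α = β. -/
def IsSolution {A : Type} (h : ℕ → List (Option A)) (α β : List (Option A ⊕ ℕ)) : Prop :=
  applySub h α = applySub h β

/-- `h` is an overlapping solution of α_μ = β_μ : it is a solution and, for every
`1 ≤ i ≤ n`, there is `z_i` such that `w_i z_i` is a suffix of `h(x_i)` and
`h(# u_start x_1 w'_1 ⋯ w'_{i-1} x_i) = h(x_1 w_1 ⋯ x_i w_i) z_i`. -/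
def OverlappingSolution {A : Type} (n : ℕ) (ustart uend : List A) (w w' : ℕ → List A)
    (h : ℕ → List (Option A)) : Prop :=
  IsSolution h (alphaMu n uend w) (betaMu n ustart w') ∧
  ∀ i, 1 ≤ i → i ≤ n → ∃ z : List (Option A),
    (liftW (w i) ++ z) <:+ h i ∧
    applySub h (betaPrefix ustart w' i) = applySub h (alphaPrefix w i) ++ z

/-- `n`-fold concatenation `u^n` of the word `u`. -/
def npow {A : Type} (u : List A) : ℕ → List A
  | 0 => []
  | n + 1 => u ++ npow u n

/-- `y_i`, the suffix of `h(x_i)` of length `|v_i| - |w_i|`. -/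
def ySuf {A : Type} (h : ℕ → List (Option A)) (v : ℕ → List (Option A)) (w : ℕ → List A)
    (i : ℕ) : List (Option A) :=
  (h i).drop ((h i).length - ((v i).length - (w i).length))

/-- Two words are conjugate if `u = st` and `v = ts` for some words `s`, `t`. -/
def Conj {B : Type} (u v : List B) : Prop := ∃ s t : List B, u = s ++ t ∧ v = t ++ s

/-- The words `v_1, …, v_n` associated with an overlapping solution `h`
(as guaranteed by the characterisation of overlapping solutions):
`v_i` is a prefix of `h(x_i)`, `|w_i| ≤ |v_i|`, `h(x_i) w_i` is a prefix of `v_i^ω`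
(i.e. of `v_i^m` for all sufficiently large `m`), `v_1 = # u_start`,
`v_i = y_{i-1} w'_{i-1}` for `2 ≤ i ≤ n`, and `y_n w'_n h(x_{n+1}) = h(x_{n+1}) # u_end`. -/
def AssocWords {A : Type} (n : ℕ) (ustart uend : List A) (w w' : ℕ → List A)
    (h : ℕ → List (Option A)) (v : ℕ → List (Option A)) : Prop :=
  (∀ i, 1 ≤ i → i ≤ n →
    v i <+: h i ∧ (w i).length ≤ (v i).length ∧
    ∃ N : ℕ, ∀ m : ℕ, N ≤ m → (h i ++ liftW (w i)) <+: npow (v i) m) ∧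
  v 1 = none :: liftW ustart ∧
  (∀ i, 2 ≤ i → i ≤ n → v i = ySuf h v w (i - 1) ++ liftW (w' (i - 1))) ∧
  ySuf h v w n ++ liftW (w' n) ++ h (n + 1) = h (n + 1) ++ none :: liftW uend

end REP

/-!
Write `z_i` for the words of an overlapping solution and set `v_1 = # u_start`,
`v_{i+1} = z_i w'_i`. Cancelling the common prefix `h(x_1 w_1 ⋯ x_{i-1} w_{i-1})` turns the
defining equations of the `z_i` into the conjugacy equations `v_i h(x_i) = h(x_i) w_i z_i`, and
the equation `α_μ = β_μ` into condition (3). A conjugacy equation `v x = x t` with `|v| ≤ |x|`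
makes `v` a prefix and `t` a suffix of `x`, and `x t` a prefix of every long enough power of `v`
when `v ≠ []`. Conversely, if `x w` is a prefix of a power of `v` then so is `v x`, whence
`v x = x w y`, and `y` is the suffix `y_i` of `x`.
-/

namespace List

variable {α : Type*} {v x t : List α}

theorem perm_of_append_eq_append (e : v ++ x = x ++ t) : v ~ t :=
  (perm_append_left_iff x).1 (e ▸ perm_append_comm)

theorem prefix_of_append_eq_append (e : v ++ x = x ++ t) (hv : v.length ≤ x.length) :
    v <+: x :=
  prefix_of_prefix_length_le (e ▸ prefix_append v x) (prefix_append x t) hv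

theorem suffix_of_append_eq_append (e : v ++ x = x ++ t) (hv : v.length ≤ x.length) :
    t <:+ x := by
  have ht : t.length = v.length := by
    have := congrArg length e
    simp only [length_append] at this
    omega
  exact suffix_of_suffix_length_le (e ▸ suffix_append x t) (suffix_append v x) (ht ▸ hv)

end List

namespace REP

open List

section Powers

variable {α : Type}

theorem npow_length (v : List α) (m : ℕ) : (npow v m).length = m * v.length := by
  induction m with
  | zero => simp [npow]
  | succ m ih => simp [npow, ih, Nat.succ_mul, Nat.add_comm]

theorem npow_succ' (v : List α) (m : ℕ) : npow v (m + 1) = npow v m ++ v := by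
  induction m with
  | zero => simp [npow]
  | succ m ih =>
    show v ++ npow v (m + 1) = v ++ npow v m ++ v
    rw [ih, append_assoc]

theorem npow_append_eq_append_npow {v x t : List α} (e : v ++ x = x ++ t) (m : ℕ) :
    npow v m ++ x = x ++ npow t m := by
  induction m with
  | zero => simp [npow]
  | succ m ih =>
    show v ++ npow v m ++ x = x ++ (t ++ npow t m)
    rw [append_assoc, ih, ← append_assoc, e, append_assoc]

theorem prefix_npow_of_append_eq_append {v x t : List α} (e : v ++ x = x ++ t) (hv : v ≠ [])
    {m : ℕ} (hm : x.length + t.length < m) : x ++ t <+: npow v m := by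
  obtain ⟨k, rfl⟩ : ∃ k, m = k + 1 := ⟨m - 1, by omega⟩
  have hxt : x ++ t <+: npow v (k + 1) ++ x := by
    rw [npow_append_eq_append_npow e]
    exact (prefix_append_right_inj x).2 (prefix_append t _)
  refine prefix_of_prefix_length_le hxt (prefix_append _ x) ?_
  have : k + 1 ≤ (k + 1) * v.length :=
    Nat.le_mul_of_pos_right _ (length_pos_iff.2 hv)
  rw [npow_length, length_append]
  omega

theorem prefix_period_of_append_eq_append {v x l y : List α} (e : v ++ x = x ++ (l ++ y))
    (hv : v ≠ []) (hsuf : l ++ y <:+ x) :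
    v <+: x ∧ l.length ≤ v.length ∧ ∃ N, ∀ m, N ≤ m → x ++ l <+: npow v m := by
  have hlen : v.length = l.length + y.length := by
    have := congrArg length e
    simp only [length_append] at this
    omega
  refine ⟨prefix_of_append_eq_append e ?_, by omega, x.length + (l ++ y).length + 1,
    fun m hm => ?_⟩
  · simpa [hlen] using hsuf.length_le
  · have hxly := prefix_npow_of_append_eq_append e hv (m := m)
      (by simp only [length_append] at hm ⊢; omega)
    exact ((prefix_append_right_inj x).2 (prefix_append l y)).trans hxly

theorem append_eq_of_prefix_period {v x l : List α} (hvx : v <+: x) (hl : l.length ≤ v.length)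
    (hper : ∃ N, ∀ m, N ≤ m → x ++ l <+: npow v m) :
    v ++ x = x ++ (l ++ x.drop (x.length - (v.length - l.length))) := by
  obtain ⟨N, hN⟩ := hper
  have hxl : x ++ l <+: npow v (N + 1) := (hN N le_rfl).trans ⟨v, (npow_succ' v N).symm⟩
  have hvx' : v ++ x <+: npow v (N + 1) :=
    (prefix_append_right_inj v).2 ((prefix_append x l).trans (hN N le_rfl))
  obtain ⟨y, hy⟩ := prefix_of_prefix_length_le hxl hvx' (by simp only [length_append]; omega)
  have hylen : y.length = v.length - l.length := by
    have := congrArg length hy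
    simp only [length_append] at this
    omega
  have hysuf : y <:+ x := by
    have := hvx.length_le
    exact suffix_of_suffix_length_le ⟨x ++ l, hy⟩ (suffix_append v x) (by omega)
  rw [← hylen, ← suffix_iff_eq_drop.1 hysuf, ← append_assoc, hy]

end Powers

variable {A : Type} {n : ℕ} {ustart uend : List A} {w w' : ℕ → List A}
  {h : ℕ → List (Option A)}

theorem liftW_length (u : List A) : (liftW u).length = u.length := length_map _

theorem none_notMem_liftW (u : List A) : none ∉ liftW u := by simp [liftW]

theorem applySub_append (p q : List (Option A ⊕ ℕ)) :
    applySub h (p ++ q) = applySub h p ++ applySub h q := by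
  induction p with
  | nil => rfl
  | cons a p ih => cases a <;> simp [applySub, ih]

theorem applySub_lift (u : List A) : applySub h (lift u) = liftW u := by
  induction u with
  | nil => rfl
  | cons a u ih => simpa [lift, liftW, applySub] using ih

theorem applySub_alphaPrefix_succ (w : ℕ → List A) (i : ℕ) :
    applySub h (alphaPrefix w (i + 1)) =
      applySub h (alphaPrefix w i) ++ h (i + 1) ++ liftW (w (i + 1)) := by
  simp [alphaPrefix, blocks, applySub_append, applySub, applySub_lift]

theorem applySub_betaPrefix_one (ustart : List A) (w' : ℕ → List A) :
    applySub h (betaPrefix ustart w' 1) = none :: liftW ustart ++ h 1 := by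
  simp [betaPrefix, blocks, applySub_append, applySub, applySub_lift, hash]

theorem applySub_betaPrefix_succ (ustart : List A) (w' : ℕ → List A) {i : ℕ} (hi : 1 ≤ i) :
    applySub h (betaPrefix ustart w' (i + 1)) =
      applySub h (betaPrefix ustart w' i) ++ liftW (w' i) ++ h (i + 1) := by
  obtain ⟨k, rfl⟩ : ∃ k, i = k + 1 := ⟨i - 1, by omega⟩
  simp [betaPrefix, blocks, applySub_append, applySub, applySub_lift, hash]

theorem betaPrefix_one_eq_iff {z : List (Option A)} :
    applySub h (betaPrefix ustart w' 1) = applySub h (alphaPrefix w 1) ++ z ↔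
      none :: liftW ustart ++ h 1 = h 1 ++ (liftW (w 1) ++ z) := by
  simp [applySub_betaPrefix_one, applySub_lift, alphaPrefix, blocks, applySub]

theorem betaPrefix_succ_eq_iff {i : ℕ} (hi : 1 ≤ i) {z z' : List (Option A)}
    (hB : applySub h (betaPrefix ustart w' i) = applySub h (alphaPrefix w i) ++ z) :
    applySub h (betaPrefix ustart w' (i + 1)) = applySub h (alphaPrefix w (i + 1)) ++ z' ↔
      z ++ liftW (w' i) ++ h (i + 1) = h (i + 1) ++ (liftW (w (i + 1)) ++ z') := by
  rw [applySub_betaPrefix_succ ustart w' hi, applySub_alphaPrefix_succ, hB]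
  simp only [append_assoc, append_right_inj]

theorem isSolution_iff (hn : 1 ≤ n) {z : List (Option A)}
    (hB : applySub h (betaPrefix ustart w' n) = applySub h (alphaPrefix w n) ++ z) :
    IsSolution h (alphaMu n uend w) (betaMu n ustart w') ↔
      z ++ liftW (w' n) ++ h (n + 1) = h (n + 1) ++ none :: liftW uend := by
  have hβ : applySub h (betaMu n ustart w') =
      applySub h (betaPrefix ustart w' n) ++ liftW (w' n) ++ h (n + 1) := by
    rw [← applySub_betaPrefix_succ ustart w' hn]
    simp [betaMu, betaPrefix]
  rw [IsSolution, hβ, hB, alphaMu, applySub_append, applySub_append]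
  simp [applySub, applySub_lift, hash, alphaPrefix, eq_comm]

theorem betaPrefix_eq_iff_append_eq_append (hn : 1 ≤ n) (z v : ℕ → List (Option A))
    (hv₁ : v 1 = none :: liftW ustart)
    (hv : ∀ i, 1 ≤ i → i < n → v (i + 1) = z i ++ liftW (w' i)) :
    (∀ i, 1 ≤ i → i ≤ n →
        applySub h (betaPrefix ustart w' i) = applySub h (alphaPrefix w i) ++ z i) ↔
      ∀ i, 1 ≤ i → i ≤ n → v i ++ h i = h i ++ (liftW (w i) ++ z i) := by
  constructor
  · intro hB i hi hin
    obtain ⟨k, rfl⟩ : ∃ k, i = k + 1 := ⟨i - 1, by omega⟩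
    rcases Nat.eq_zero_or_pos k with rfl | hk
    · exact hv₁ ▸ betaPrefix_one_eq_iff.1 (hB 1 le_rfl hn)
    · rw [hv k hk hin]
      exact (betaPrefix_succ_eq_iff hk (hB k hk (by omega))).1 (hB (k + 1) hi hin)
  · intro hconj i hi
    induction i, hi using Nat.le_induction with
    | base => exact fun _ => betaPrefix_one_eq_iff.2 (hv₁ ▸ hconj 1 le_rfl hn)
    | succ k hk ih =>
      intro hkn
      refine (betaPrefix_succ_eq_iff hk (ih (by omega))).2 ?_
      exact hv k hk hkn ▸ hconj (k + 1) (by omega) hkn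

theorem OverlappingSolution.exists_assocWords (hn : 1 ≤ n)
    (hs : OverlappingSolution n ustart uend w w' h) :
    ∃ v, AssocWords n ustart uend w w' h v := by
  obtain ⟨hsol, hov⟩ := hs
  choose! z hzsuf hB using hov
  let v : ℕ → List (Option A) := fun i =>
    if i ≤ 1 then none :: liftW ustart else z (i - 1) ++ liftW (w' (i - 1))
  have hv : ∀ i, 1 ≤ i → i < n → v (i + 1) = z i ++ liftW (w' i) := fun i hi _ => by
    simp [v, show ¬i + 1 ≤ 1 by omega]
  have hconj := (betaPrefix_eq_iff_append_eq_append hn z v rfl hv).1 hB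
  -- `v_i ≠ []`: `#` occurs in `v_1` and passes from `v_i` to its conjugate `w_i z_i`, hence
  -- to `v_{i+1}`.
  have hmem : ∀ i, 1 ≤ i → i ≤ n → none ∈ v i := by
    intro i hi
    induction i, hi using Nat.le_induction with
    | base => simp [v]
    | succ k hk ih =>
      intro hkn
      have hzk := ((perm_of_append_eq_append (hconj k hk (by omega))).mem_iff.1 (ih (by omega)))
      rw [hv k hk hkn, mem_append]
      exact .inl ((mem_append.1 hzk).resolve_left (none_notMem_liftW _))
  have hzy : ∀ i, 1 ≤ i → i ≤ n → z i = ySuf h v w i := fun i hi hin => by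
    have hlen := congrArg length (hconj i hi hin)
    simp only [length_append, liftW_length] at hlen
    rw [ySuf, show (v i).length - (w i).length = (z i).length by omega]
    exact suffix_iff_eq_drop.1 ((suffix_append _ _).trans (hzsuf i hi hin))
  refine ⟨v, fun i hi hin => ?_, rfl, fun i hi hin => ?_, ?_⟩
  · simpa [liftW_length] using prefix_period_of_append_eq_append (hconj i hi hin)
      (ne_nil_of_mem (hmem i hi hin)) (hzsuf i hi hin)
  · obtain ⟨k, rfl⟩ : ∃ k, i = k + 1 := ⟨i - 1, by omega⟩
    rw [hv k (by omega) hin, Nat.add_sub_cancel, hzy k (by omega) (by omega)]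
  · rw [← hzy n hn le_rfl]
    exact (isSolution_iff hn (hB n hn le_rfl)).1 hsol

theorem AssocWords.overlappingSolution (hn : 1 ≤ n) {v : ℕ → List (Option A)}
    (hv : AssocWords n ustart uend w w' h v) : OverlappingSolution n ustart uend w w' h := by
  obtain ⟨hper, hv₁, hvsucc, hend⟩ := hv
  have hconj : ∀ i, 1 ≤ i → i ≤ n → v i ++ h i = h i ++ (liftW (w i) ++ ySuf h v w i) :=
    fun i hi hin => by
      obtain ⟨hvx, hl, hN⟩ := hper i hi hin
      simpa only [ySuf, liftW_length] using
        append_eq_of_prefix_period hvx (by rwa [liftW_length]) hN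
  have hB := (betaPrefix_eq_iff_append_eq_append hn (ySuf h v w) v hv₁
    fun i hi hin => by simpa using hvsucc (i + 1) (by omega) hin).2 hconj
  refine ⟨(isSolution_iff hn (hB n hn le_rfl)).2 hend, fun i hi hin => ⟨ySuf h v w i, ?_,
    hB i hi hin⟩⟩
  exact suffix_of_append_eq_append (hconj i hi hin) (hper i hi hin).1.length_le

end REP

open REP in
theorem stmt3 (A : Type) (n : ℕ) (hn : 1 ≤ n) (ustart uend : List A)
    (w w' : ℕ → List A) (h : ℕ → List (Option A)) :
    OverlappingSolution n ustart uend w w' h ↔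
    ∃ v : ℕ → List (Option A),
      (∀ i, 1 ≤ i → i ≤ n →
        v i <+: h i ∧ (w i).length ≤ (v i).length ∧
        ∃ N : ℕ, ∀ m : ℕ, N ≤ m → (h i ++ liftW (w i)) <+: npow (v i) m) ∧
      v 1 = none :: liftW ustart ∧
      (∀ i, 2 ≤ i → i ≤ n → v i = ySuf h v w (i - 1) ++ liftW (w' (i - 1))) ∧
      ySuf h v w n ++ liftW (w' n) ++ h (n + 1) = h (n + 1) ++ none :: liftW uend :=
  ⟨OverlappingSolution.exists_assocWords hn,
    fun ⟨_, hv⟩ => AssocWords.overlappingSolution hn hv⟩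
end

section
/- Let μ be an instance of REP over Σ with words u_start, u_end and rules w_i → w'_i for 1 ≤ i ≤ n, and let h be an overlapping solution of α_μ = β_μ with associated words v_1,…,v_n, suffixes y_1,…,y_n, and v_{n+1} := y_n w'_n. For 1 ≤ i ≤ n+1 let ṽ_i denote the unique conjugate of v_i that begins with the letter # (it exists since each v_i contains exactly one occurrence of #). Then for every 1 ≤ i ≤ n there exist words s_i, t_i ∈ Σ^* such that ṽ_i = # s_i w_i t_i and ṽ_{i+1} = # s_i w'_i t_i. -/
/-!
Since `h(x_i) w_i` is a prefix of `v_i^ω` and `|v_i| ≤ |h(x_i)|`, its suffix `y_i w_i` of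
length `|v_i|` is a conjugate of `v_i`. As `v_1 = # u_start` and `v_{i+1} = y_i w'_i`, induction
on `i` shows that each `v_i`, hence each `y_i`, contains exactly one `#`. Writing
`y_i = t # s` with `s, t ∈ Σ^*` then gives `ṽ_i = # s w_i t` and `ṽ_{i+1} = # s w'_i t`.
-/

namespace REP

section Periodicity

variable {B : Type}

theorem length_npow (v : List B) (m : ℕ) : (npow v m).length = m * v.length := by
  induction m with
  | zero => simp [npow]
  | succ m ih => simp [npow, ih, Nat.succ_mul, Nat.add_comm]

theorem getElem_npow (v : List B) (m k : ℕ) (hk : k < (npow v m).length) :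
    (npow v m)[k] = v[k % v.length]'(Nat.mod_lt _ (Nat.pos_of_ne_zero fun h0 => by
      simp [length_npow, h0] at hk)) := by
  induction m generalizing k with
  | zero => simp [npow] at hk
  | succ m ih =>
    simp only [npow, List.getElem_append]
    split_ifs with hkv
    · simp [Nat.mod_eq_of_lt hkv]
    · rw [ih]
      congr 1
      exact (Nat.mod_eq_sub_mod (by omega)).symm

theorem drop_eq_rotate_of_prefix_npow {x v : List B} {m q : ℕ} (hx : x <+: npow v m)
    (hlen : x.length = q + v.length) : x.drop q = v.rotate q := by
  refine List.ext_getElem (by simp [hlen]) fun j hj _ => ?_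
  rw [List.getElem_drop, hx.getElem, getElem_npow, List.getElem_rotate]
  congr 2
  omega

end Periodicity

theorem conj_of_isRotated {B : Type} {u v : List B} (h : u ~r v) : Conj u v := by
  obtain ⟨k, rfl⟩ := h
  exact ⟨u.take (k % u.length), u.drop (k % u.length), (List.take_append_drop _ _).symm,
    List.rotate_eq_drop_append_take_mod⟩

section Hash

variable {A : Type}

theorem countP_isNone_liftW (u : List A) : (liftW u).countP Option.isNone = 0 := by
  simp [liftW, List.countP_eq_zero]

theorem exists_liftW_eq {l : List (Option A)} (hl : ∀ x ∈ l, x ≠ none) :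
    ∃ u, liftW u = l := by
  induction l with
  | nil => exact ⟨[], rfl⟩
  | cons x l ih =>
    obtain ⟨a, rfl⟩ := Option.ne_none_iff_exists'.mp (hl x List.mem_cons_self)
    obtain ⟨u, hu⟩ := ih fun y hy => hl y (List.mem_cons_of_mem _ hy)
    exact ⟨a :: u, by simp [liftW, ← hu]⟩

theorem exists_eq_liftW_append_none_cons_liftW {l : List (Option A)}
    (hl : l.countP Option.isNone = 1) : ∃ s t, l = liftW s ++ none :: liftW t := by
  obtain ⟨x, hx, hxnone⟩ := List.countP_pos_iff.mp (hl ▸ Nat.one_pos)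
  obtain ⟨p, q, rfl⟩ := List.append_of_mem hx
  rw [Option.isNone_iff_eq_none.mp hxnone] at hl ⊢
  simp only [List.countP_append, List.countP_cons, Option.isNone_none, if_true] at hl
  have none_free : ∀ r : List (Option A), r.countP Option.isNone = 0 → ∀ y ∈ r, y ≠ none :=
    fun r hr => by simpa [List.countP_eq_zero] using hr
  obtain ⟨s, rfl⟩ := exists_liftW_eq (none_free p (by omega))
  obtain ⟨t, rfl⟩ := exists_liftW_eq (none_free q (by omega))
  exact ⟨s, t, rfl⟩

end Hash

namespace AssocWords

variable {A : Type} {n : ℕ} {ustart uend : List A} {w w' : ℕ → List A}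
  {h v : ℕ → List (Option A)}

theorem isRotated_ySuf_append (hv : AssocWords n ustart uend w w' h v) {i : ℕ}
    (hi : 1 ≤ i) (hin : i ≤ n) : v i ~r ySuf h v w i ++ liftW (w i) := by
  obtain ⟨hpre, hwv, N, hN⟩ := hv.1 i hi hin
  have hvh := hpre.length_le
  set q := (h i).length - ((v i).length - (w i).length)
  have hlen : (h i ++ liftW (w i)).length = q + (v i).length := by
    simp only [List.length_append, liftW, List.length_map]
    omega
  have hdrop := drop_eq_rotate_of_prefix_npow (hN N le_rfl) hlen
  rw [List.drop_append_of_le_length (Nat.sub_le _ _)] at hdrop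
  exact ⟨q, hdrop.symm⟩

theorem countP_isNone_ySuf (hv : AssocWords n ustart uend w w' h v) {i : ℕ}
    (hi : 1 ≤ i) (hin : i ≤ n) : (ySuf h v w i).countP Option.isNone = 1 := by
  have hrot : ∀ j, 1 ≤ j → j ≤ n →
      (ySuf h v w j).countP Option.isNone = (v j).countP Option.isNone := fun j hj hjn => by
    rw [(hv.isRotated_ySuf_append hj hjn).perm.countP_eq, List.countP_append,
      countP_isNone_liftW, Nat.add_zero]
  induction i, hi using Nat.le_induction with
  | base => simp [hrot 1 le_rfl hin, hv.2.1, countP_isNone_liftW]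
  | succ i hi ih =>
    rw [hrot (i + 1) (by omega) hin, hv.2.2.1 (i + 1) (by omega) hin, Nat.add_sub_cancel,
      List.countP_append, ih (by omega), countP_isNone_liftW]

theorem next_eq_ySuf_append (hv : AssocWords n ustart uend w w' h v) {i : ℕ}
    (hi : 1 ≤ i) (hin : i ≤ n) :
    (if i + 1 = n + 1 then ySuf h v w n ++ liftW (w' n) else v (i + 1)) =
      ySuf h v w i ++ liftW (w' i) := by
  split_ifs with hlast
  · obtain rfl : i = n := by omega
    rfl
  · rw [hv.2.2.1 (i + 1) (by omega) (by omega), Nat.add_sub_cancel]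

end AssocWords

end REP

open REP in
theorem stmt6_general (A : Type) (n : ℕ)
    (ustart uend : List A) (w w' : ℕ → List A)
    (h : ℕ → List (Option A)) (v : ℕ → List (Option A))
    (hv : AssocWords n ustart uend w w' h v) :
    ∀ i, 1 ≤ i → i ≤ n → ∃ s t : List A,
      Conj (none :: (liftW s ++ liftW (w i) ++ liftW t)) (v i) ∧
      Conj (none :: (liftW s ++ liftW (w' i) ++ liftW t))
        (if i + 1 = n + 1 then ySuf h v w n ++ liftW (w' n) else v (i + 1)) := by
  intro i hi hin
  obtain ⟨s, t, hy⟩ := exists_eq_liftW_append_none_cons_liftW (hv.countP_isNone_ySuf hi hin)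
  have rotate_to_hash : ∀ W : List (Option A),
      none :: (liftW t ++ W ++ liftW s) ~r ySuf h v w i ++ W := fun W => by
    simpa [hy] using List.isRotated_append (l := none :: (liftW t ++ W)) (l' := liftW s)
  refine ⟨t, s, conj_of_isRotated ?_, conj_of_isRotated ?_⟩
  · exact (rotate_to_hash _).trans (hv.isRotated_ySuf_append hi hin).symm
  · exact hv.next_eq_ySuf_append hi hin ▸ rotate_to_hash _

open REP in
theorem stmt6 (A : Type) (n : ℕ) (hn : 1 ≤ n)
    (ustart uend : List A) (w w' : ℕ → List A)
    (h : ℕ → List (Option A)) (v : ℕ → List (Option A))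
    (hover : OverlappingSolution n ustart uend w w' h)
    (hv : AssocWords n ustart uend w w' h v) :
    ∀ i, 1 ≤ i → i ≤ n → ∃ s t : List A,
      Conj (none :: (liftW s ++ liftW (w i) ++ liftW t)) (v i) ∧
      Conj (none :: (liftW s ++ liftW (w' i) ++ liftW t))
        (if i + 1 = n + 1 then ySuf h v w n ++ liftW (w' n) else v (i + 1)) :=
  stmt6_general A n ustart uend w w' h v hv
end

section
/- Let h be a minimal solution to a regular-ordered word equation E: α = β, and let S_p be any sequence of positions associated with h. Then S_p contains at most one position for each variable; that is, S_p does not contain two distinct entries (x,z,d) and (x,z',d') with the same variable x. -/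
/-!
Framework for quadratic word equations, positions, correspondence and the
sequences S_p of equivalent positions.  Constants `C`, variables `V`;
patterns are words over `C ⊕ V`.
-/

namespace WEq

variable {C V : Type}

/-- Apply a substitution (identity on constants) to a pattern. -/
def applySub (h : V → List C) : List (C ⊕ V) → List C
  | [] => []
  | Sum.inl a :: rest => a :: applySub h rest
  | Sum.inr x :: rest => h x ++ applySub h rest

/-- The image of a single symbol under the substitution `h`. -/
def img (h : V → List C) : C ⊕ V → List C := Sum.elim (fun a => [a]) h

/-- A position `(x, z, d)`: the `d`-th letter (1-indexed) of the copy of `h(x)`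
produced by the `z`-th occurrence (1-indexed) of the symbol `x` in αβ. -/
abbrev Pos (C V : Type) := (C ⊕ V) × ℕ × ℕ

/-- The equation α = β is quadratic: every variable occurs at most twice in αβ. -/
def Quadratic [DecidableEq C] [DecidableEq V] (α β : List (C ⊕ V)) : Prop :=
  ∀ x : V, (α ++ β).count (Sum.inr x) ≤ 2

/-- `s` is a constant symbol, or a variable occurring exactly once in αβ. -/
def SingleOrConst [DecidableEq C] [DecidableEq V] (α β : List (C ⊕ V)) (s : C ⊕ V) : Prop :=
  (∃ a : C, s = Sum.inl a) ∨ (α ++ β).count s = 1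

/-- `(x, z, d)` is a valid position w.r.t. the solution `h` of α = β. -/
def ValidPos [DecidableEq C] [DecidableEq V] (α β : List (C ⊕ V)) (h : V → List C)
    (p : Pos C V) : Prop :=
  1 ≤ p.2.1 ∧ p.2.1 ≤ (α ++ β).count p.1 ∧ 1 ≤ p.2.2 ∧ p.2.2 ≤ (img h p.1).length

/-- The `z`-th occurrence (1-indexed) of the symbol `s` in γ is at list index `j`
(0-indexed). -/
def IsOcc [DecidableEq C] [DecidableEq V] (γ : List (C ⊕ V)) (s : C ⊕ V) (z j : ℕ) : Prop :=
  γ[j]? = some s ∧ (γ.take j).count s + 1 = z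

/-- The offset, in the common solution word `h(α) = h(β)`, of the image of the
symbol occurrence at index `j` of αβ (indices `j < |α|` lie in α, the others in β). -/
def offset (h : V → List C) (α β : List (C ⊕ V)) (j : ℕ) : ℕ :=
  if j < α.length then (applySub h (α.take j)).length
  else (applySub h (β.take (j - α.length))).length

/-- Positions `p` and `q` correspond: one arises from an occurrence in α, the other
from an occurrence in β, and they produce the same letter-position of the common
solution word `h(α) = h(β)`. -/
def Corresponds [DecidableEq C] [DecidableEq V] (α β : List (C ⊕ V)) (h : V → List C)
    (p q : Pos C V) : Prop :=
  ValidPos α β h p ∧ ValidPos α β h q ∧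
  ∃ j j' : ℕ, IsOcc (α ++ β) p.1 p.2.1 j ∧ IsOcc (α ++ β) q.1 q.2.1 j' ∧
    ((j < α.length ∧ ¬ j' < α.length) ∨ (¬ j < α.length ∧ j' < α.length)) ∧
    offset h α β j + p.2.2 = offset h α β j' + q.2.2

open Classical in
/-- The (unique, when it exists) position corresponding to `q`. -/
noncomputable def nextCorr [DecidableEq C] [DecidableEq V] (α β : List (C ⊕ V))
    (h : V → List C) (q : Pos C V) : Option (Pos C V) :=
  if hq : ∃! r : Pos C V, Corresponds α β h q r then some hq.choose else none

/-- The other occurrence index: `1 ↦ 2`, `2 ↦ 1`. -/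
def flipz (z : ℕ) : ℕ := if z = 1 then 2 else 1

/-- The sequence S_p (as a partial function `ℕ → Option (Pos C V)`, 1-indexed after
the head `p` at index 0... here `seqS p 1 = p₁ = p`? We index so that
`seqS p 1 = p` is NOT used; instead `seqS p 0 = p = p₁` and `seqS p 1 = p₂`, etc.):
`p₁ = p`, `p₂` is the position corresponding to `p₁`; for `i ≥ 2`, if
`p_i = (x, z, d)` with `x` a constant or a variable occurring only once the
sequence terminates (`none`), and otherwise `p_{i+1}` is the position
corresponding to `(x, z', d)` where `z' ≠ z` indexes the other occurrence of `x`. -/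
noncomputable def seqS [DecidableEq C] [DecidableEq V] (α β : List (C ⊕ V))
    (h : V → List C) (p : Pos C V) : ℕ → Option (Pos C V)
  | 0 => some p
  | 1 => nextCorr α β h p
  | i + 2 =>
    match seqS α β h p (i + 1) with
    | none => none
    | some q =>
      match q.1 with
      | Sum.inl _ => none
      | Sum.inr x =>
        if (α ++ β).count (Sum.inr x : C ⊕ V) = 2 then
          nextCorr α β h (q.1, flipz q.2.1, q.2.2)
        else none

/-- Regular equation: each variable occurs at most once in each side. -/
def Regular [DecidableEq C] [DecidableEq V] (α β : List (C ⊕ V)) : Prop :=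
  ∀ x : V, α.count (Sum.inr x) ≤ 1 ∧ β.count (Sum.inr x) ≤ 1

/-- Regular-ordered equation: regular, and any two variables occurring on both
sides occur in the same relative order in α as in β. -/
def RegularOrdered [DecidableEq C] [DecidableEq V] (α β : List (C ⊕ V)) : Prop :=
  Regular α β ∧
  ∀ x y : V, Sum.inr x ∈ α → Sum.inr x ∈ β → Sum.inr y ∈ α → Sum.inr y ∈ β →
    (α.idxOf (Sum.inr x) < α.idxOf (Sum.inr y) ↔
      β.idxOf (Sum.inr x) < β.idxOf (Sum.inr y))

end WEq

/-!
The entries of `S_p` after `p` all lie on the side opposite to `p`: a step jumps to the other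
occurrence of a variable, which by regularity is on the other side, and then corresponds back.
Read as letters of the common solution word, a step sends the letter `offset(x) + d` of one copy
of `h x` to the letter `offset'(x) + d` of the other copy, and since the equation is
regular-ordered this map is strictly monotone.

Suppose entries `i < j` both lie in copies of `h x`. If `p` itself is `x`, then `x` occurs once and
its occurrence is on `p`'s side, which no later entry is. Otherwise the shift `offset' x - offset x`
moves the letters of the sequence monotonically from `i` on, so entry `j` lies within `|h x|`
letters of entry `i + 1`: the two copies of `h x` overlap with a nonzero shift, and dropping that
many letters of `h x` gives a shorter solution. If the shift is zero, the two copies of `h x` are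
aligned, so going backwards every entry stays inside `h x`, and `p` would be an occurrence of `x`.
-/

instance {A B : Type} [BEq A] [LawfulBEq A] [BEq B] [LawfulBEq B] : LawfulBEq (A ⊕ B) where
  rfl {a} := by
    cases a with
    | inl a => exact (beq_self_eq_true a : _)
    | inr b => exact (beq_self_eq_true b : _)
  eq_of_beq {a b} h := by
    cases a <;> cases b <;> first | exact congrArg _ (eq_of_beq h) | cases h

namespace List

variable {A : Type}

theorem count_take_lt_count_take [BEq A] [LawfulBEq A] {l : List A} {a : A} {n m : ℕ}
    (hnm : n < m) (ha : l[n]? = some a) : (l.take n).count a < (l.take m).count a := by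
  have hsucc : (l.take (n + 1)).count a = (l.take n).count a + 1 := by
    simp [take_add_one, ha]
  have := (take_prefix_take_left (l := l) (i := n + 1) hnm).count_le a
  omega

theorem eq_of_getElem?_eq_of_count_le_one [BEq A] [LawfulBEq A] {l : List A} {a : A}
    (hc : l.count a ≤ 1) {n m : ℕ} (hn : l[n]? = some a) (hm : l[m]? = some a) : n = m := by
  by_contra hne
  wlog hlt : n < m generalizing n m
  · exact this hm hn (Ne.symm hne) (by omega)
  have hm_lt : m < l.length := (getElem?_eq_some_iff.1 hm).1
  have h1 := count_take_lt_count_take hlt hn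
  have h2 := count_take_lt_count_take hm_lt hm
  rw [take_length] at h2
  omega

theorem idxOf_eq_of_getElem?_eq_of_count_le_one [BEq A] [LawfulBEq A] {l : List A} {a : A}
    (hc : l.count a ≤ 1) {n : ℕ} (hn : l[n]? = some a) : l.idxOf a = n := by
  have hlt : l.idxOf a < l.length := idxOf_lt_length_iff.2 (mem_of_getElem? hn)
  exact eq_of_getElem?_eq_of_count_le_one hc (by simp [hlt, getElem_idxOf]) hn

theorem not_mem_take_and_not_mem_drop_of_count_eq_one [BEq A] [LawfulBEq A] {l : List A}
    {a : A} (hc : l.count a = 1) {n : ℕ} (hn : l[n]? = some a) :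
    a ∉ l.take n ∧ a ∉ l.drop (n + 1) := by
  obtain ⟨hlt, rfl⟩ := getElem?_eq_some_iff.1 hn
  have hsplit := congrArg (count l[n]) (take_append_drop n l)
  rw [drop_eq_getElem_cons hlt, count_append, count_cons_self] at hsplit
  simp only [← count_eq_zero]
  omega

theorem append_drop_append_eq_of_shift {Sa Sb u Ea Eb : List A} {Δ : ℕ}
    (heq : Sa ++ (u ++ Ea) = Sb ++ (u ++ Eb)) (hlen : Sa.length = Sb.length + Δ)
    (hΔ : Δ ≤ u.length) : Sa ++ (u.drop Δ ++ Ea) = Sb ++ (u.drop Δ ++ Eb) := by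
  have hSa : Sa = Sb ++ u.take Δ := by
    have := congrArg (take (Sb.length + Δ)) heq
    rwa [← hlen, take_left, hlen, take_length_add_append, take_append_of_le_length hΔ] at this
  subst hSa
  have hu : u.take Δ ++ (u ++ Ea) = u ++ Eb := by simpa using heq
  have := congrArg (drop Δ) hu
  rw [drop_left' (by simp; omega), drop_append_of_le_length hΔ] at this
  rw [append_assoc, ← append_assoc (u.take Δ), take_append_drop, this]

end List

namespace WEq

section Substitution

variable {C V : Type} (h : V → List C)

theorem applySub_eq_flatMap (γ : List (C ⊕ V)) : applySub h γ = γ.flatMap (img h) := by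
  induction γ with
  | nil => rfl
  | cons s γ ih => cases s <;> simp [applySub, img, ih]

theorem applySub_eq_of_getElem?_eq_some {γ : List (C ⊕ V)} {n : ℕ} {x : V}
    (hx : γ[n]? = some (Sum.inr x)) :
    applySub h γ = applySub h (γ.take n) ++ (h x ++ applySub h (γ.drop (n + 1))) := by
  obtain ⟨hn, hγn⟩ := List.getElem?_eq_some_iff.1 hx
  conv_lhs => rw [← List.take_append_drop n γ, List.drop_eq_getElem_cons hn, hγn]
  simp [applySub_eq_flatMap, img]

theorem length_applySub_take_add_le {γ : List (C ⊕ V)} {n m : ℕ} {s : C ⊕ V} (hnm : n < m)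
    (hs : γ[n]? = some s) :
    (applySub h (γ.take n)).length + (img h s).length ≤ (applySub h (γ.take m)).length := by
  obtain ⟨t, ht⟩ := List.take_prefix_take_left (l := γ) (i := n + 1) hnm
  rw [← ht, List.take_add_one, hs]
  simp [applySub_eq_flatMap]

theorem applySub_congr {g : V → List C} {γ : List (C ⊕ V)}
    (hgh : ∀ y, Sum.inr y ∈ γ → g y = h y) : applySub g γ = applySub h γ := by
  simp only [applySub_eq_flatMap]
  refine List.flatMap_congr fun s hs => ?_
  cases s with
  | inl a => rfl
  | inr y => exact hgh y hs

/-- The shorter solution drops the first `Δ` letters of `h x`: the two copies of `h x`, shifted by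
`Δ` against each other, still match afterwards. -/
theorem exists_shorter_solution_of_shift [DecidableEq C] [DecidableEq V] {α β : List (C ⊕ V)}
    (hsol : applySub h α = applySub h β) {x : V} (hcα : α.count (Sum.inr x) = 1)
    (hcβ : β.count (Sum.inr x) = 1) {nα nβ Δ : ℕ} (hnα : α[nα]? = some (Sum.inr x))
    (hnβ : β[nβ]? = some (Sum.inr x)) (hΔ : 1 ≤ Δ) (hΔx : Δ ≤ (h x).length)
    (hshift : (applySub h (α.take nα)).length = (applySub h (β.take nβ)).length + Δ) :
    ∃ g : V → List C, applySub g α = applySub g β ∧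
      (applySub g α).length < (applySub h α).length := by
  set g := Function.update h x ((h x).drop Δ)
  have hg : ∀ γ : List (C ⊕ V), Sum.inr x ∉ γ → applySub g γ = applySub h γ := fun γ hγ =>
    applySub_congr h fun y hy => Function.update_of_ne (by rintro rfl; exact hγ hy) _ _
  have hfactor : ∀ (γ : List (C ⊕ V)) (n : ℕ), γ.count (Sum.inr x) = 1 →
      γ[n]? = some (Sum.inr x) →
      applySub g γ = applySub h (γ.take n) ++ ((h x).drop Δ ++ applySub h (γ.drop (n + 1))) := by
    intro γ n hc hn
    obtain ⟨htake, hdrop⟩ := List.not_mem_take_and_not_mem_drop_of_count_eq_one hc hn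
    rw [applySub_eq_of_getElem?_eq_some g hn, hg _ htake, hg _ hdrop,
      show g x = _ from Function.update_self x _ h]
  refine ⟨g, ?_, ?_⟩
  · rw [hfactor α nα hcα hnα, hfactor β nβ hcβ hnβ]
    refine List.append_drop_append_eq_of_shift ?_ hshift hΔx
    rw [← applySub_eq_of_getElem?_eq_some h hnα, ← applySub_eq_of_getElem?_eq_some h hnβ, hsol]
  · rw [hfactor α nα hcα hnα, applySub_eq_of_getElem?_eq_some h hnα]
    simp only [List.length_append, List.length_drop]
    omega

end Substitution

section Offsets

variable {C V : Type} (h : V → List C) {α β : List (C ⊕ V)}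

theorem offset_add_length_img_le {j j' : ℕ} {s : C ⊕ V} (hjj' : j < j')
    (hside : j < α.length ↔ j' < α.length) (hs : (α ++ β)[j]? = some s) :
    offset h α β j + (img h s).length ≤ offset h α β j' := by
  by_cases hj' : j' < α.length
  · have hj : j < α.length := hside.2 hj'
    rw [List.getElem?_append_left hj] at hs
    simp only [offset, hj, hj', if_true]
    exact length_applySub_take_add_le h hjj' hs
  · have hj : ¬ j < α.length := fun hj => hj' (hside.1 hj)
    rw [List.getElem?_append_right (by omega)] at hs
    simp only [offset, hj, hj', if_false]
    exact length_applySub_take_add_le h (by omega) hs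

theorem eq_of_offset_add_eq {j j' d d' : ℕ} {s s' : C ⊕ V} (hs : (α ++ β)[j]? = some s)
    (hs' : (α ++ β)[j']? = some s') (hside : j < α.length ↔ j' < α.length)
    (hd : 1 ≤ d) (hds : d ≤ (img h s).length) (hd' : 1 ≤ d') (hds' : d' ≤ (img h s').length)
    (heq : offset h α β j + d = offset h α β j' + d') : j = j' := by
  by_contra hne
  wlog hlt : j < j' generalizing j j' d d' s s'
  · exact this hs' hs hside.symm hd' hds' hd hds heq.symm (Ne.symm hne) (by omega)
  have := offset_add_length_img_le h hlt hside hs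
  omega

end Offsets

def Aligned {C V : Type} (α β : List (C ⊕ V)) (h : V → List C) (x : V) : Prop :=
  ∃ j j', (α ++ β)[j]? = some (Sum.inr x) ∧ (α ++ β)[j']? = some (Sum.inr x) ∧
    ¬ (j < α.length ↔ j' < α.length) ∧ offset h α β j = offset h α β j'

section Regular

variable {C V : Type} [DecidableEq C] [DecidableEq V] {α β : List (C ⊕ V)}

theorem IsOcc.unique {γ : List (C ⊕ V)} {s : C ⊕ V} {z j j' : ℕ} (hj : IsOcc γ s z j)
    (hj' : IsOcc γ s z j') : j = j' := by
  by_contra hne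
  wlog hlt : j < j' generalizing j j'
  · exact this hj' hj (Ne.symm hne) (by omega)
  have := List.count_take_lt_count_take hlt hj.1
  have := hj.2
  have := hj'.2
  omega

theorem count_eq_one_of_count_eq_two (hreg : Regular α β) {x : V}
    (hc : (α ++ β).count (Sum.inr x) = 2) :
    α.count (Sum.inr x) = 1 ∧ β.count (Sum.inr x) = 1 := by
  have := hreg x
  rw [List.count_append] at hc
  omega

theorem isOcc_one_iff (hreg : Regular α β) {x : V} (hc : (α ++ β).count (Sum.inr x) = 2)
    {z j : ℕ} (hj : IsOcc (α ++ β) (Sum.inr x) z j) : z = 1 ↔ j < α.length := by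
  obtain ⟨hcα, -⟩ := count_eq_one_of_count_eq_two hreg hc
  obtain ⟨hget, hz⟩ := hj
  by_cases hjα : j < α.length
  · rw [List.take_append_of_le_length hjα.le] at hz
    rw [List.getElem?_append_left hjα] at hget
    have := List.count_take_lt_count_take (l := α) hjα hget
    rw [List.take_length] at this
    simp only [hjα, iff_true]
    omega
  · obtain ⟨k, rfl⟩ := Nat.exists_eq_add_of_le (not_lt.1 hjα)
    rw [List.take_length_add_append, List.count_append] at hz
    simp only [hjα, iff_false]
    omega

theorem isOcc_flipz_side (hreg : Regular α β) {x : V} (hc : (α ++ β).count (Sum.inr x) = 2)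
    {z j j' : ℕ} (hj : IsOcc (α ++ β) (Sum.inr x) z j)
    (hj' : IsOcc (α ++ β) (Sum.inr x) (flipz z) j') : ¬ (j < α.length ↔ j' < α.length) := by
  have h1 := isOcc_one_iff hreg hc hj
  have h2 := isOcc_one_iff hreg hc hj'
  unfold flipz at h2
  split_ifs at h2 <;> tauto

theorem eq_of_getElem?_eq_inr_of_side (hreg : Regular α β) {x : V} {j j' : ℕ}
    (hj : (α ++ β)[j]? = some (Sum.inr x)) (hj' : (α ++ β)[j']? = some (Sum.inr x))
    (hside : j < α.length ↔ j' < α.length) : j = j' := by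
  by_cases hjα : j < α.length
  · have hj'α := hside.1 hjα
    rw [List.getElem?_append_left hjα] at hj
    rw [List.getElem?_append_left hj'α] at hj'
    exact List.eq_of_getElem?_eq_of_count_le_one (hreg x).1 hj hj'
  · have hj'α : ¬ j' < α.length := fun h => hjα (hside.2 h)
    rw [List.getElem?_append_right (by omega)] at hj
    rw [List.getElem?_append_right (by omega)] at hj'
    have := List.eq_of_getElem?_eq_of_count_le_one (hreg x).2 hj hj'
    omega

theorem lt_iff_lt_of_regularOrdered (hro : RegularOrdered α β) {x y : V} {jx jy kx ky : ℕ}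
    (hjx : α[jx]? = some (Sum.inr x)) (hjy : α[jy]? = some (Sum.inr y))
    (hkx : β[kx]? = some (Sum.inr x)) (hky : β[ky]? = some (Sum.inr y)) :
    jx < jy ↔ kx < ky := by
  have hreg := hro.1
  have := hro.2 x y (List.mem_of_getElem? hjx) (List.mem_of_getElem? hkx)
    (List.mem_of_getElem? hjy) (List.mem_of_getElem? hky)
  rwa [List.idxOf_eq_of_getElem?_eq_of_count_le_one (hreg x).1 hjx,
    List.idxOf_eq_of_getElem?_eq_of_count_le_one (hreg y).1 hjy,
    List.idxOf_eq_of_getElem?_eq_of_count_le_one (hreg x).2 hkx,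
    List.idxOf_eq_of_getElem?_eq_of_count_le_one (hreg y).2 hky] at this

/-- A step of `S_p`, from a letter of one copy of `h x` to the same letter of the other copy,
preserves the order of letters. -/
theorem offset_add_lt_offset_add_of_flip (h : V → List C) (hro : RegularOrdered α β) {x y : V}
    {jx jx' jy jy' dx dy : ℕ}
    (hjx : (α ++ β)[jx]? = some (Sum.inr x)) (hjx' : (α ++ β)[jx']? = some (Sum.inr x))
    (hjy : (α ++ β)[jy]? = some (Sum.inr y)) (hjy' : (α ++ β)[jy']? = some (Sum.inr y))
    (hside : jx < α.length ↔ jy < α.length) (hx : ¬ (jx < α.length ↔ jx' < α.length))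
    (hy : ¬ (jy < α.length ↔ jy' < α.length)) (hdx : dx ≤ (h x).length) (hdy : 1 ≤ dy)
    (hdy' : dy ≤ (h y).length) (hlt : offset h α β jx + dx < offset h α β jy + dy) :
    offset h α β jx' + dx < offset h α β jy' + dy := by
  by_cases hxy : x = y
  · subst hxy
    have hj := eq_of_getElem?_eq_inr_of_side hro.1 hjx hjy hside
    have hj' := eq_of_getElem?_eq_inr_of_side hro.1 hjx' hjy' (by tauto)
    subst hj hj'
    omega
  have hne : jx ≠ jy := by
    rintro rfl
    exact hxy (by simpa using hjx.symm.trans hjy)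
  have hlt₁ : jx < jy := by
    refine lt_of_le_of_ne (not_lt.1 fun hyx => ?_) hne
    have := offset_add_length_img_le h hyx hside.symm hjy
    simp only [img, Sum.elim_inr] at this
    omega
  have hlt₂ : jx' < jy' := by
    by_cases hα : jx < α.length
    · have hyα : jy < α.length := hside.1 hα
      have hx'α : ¬ jx' < α.length := by tauto
      have hy'α : ¬ jy' < α.length := by tauto
      rw [List.getElem?_append_left hα] at hjx
      rw [List.getElem?_append_left hyα] at hjy
      rw [List.getElem?_append_right (by omega)] at hjx' hjy'
      have := lt_iff_lt_of_regularOrdered hro hjx hjy hjx' hjy'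
      omega
    · have hyα : ¬ jy < α.length := fun h => hα (hside.2 h)
      have hx'α : jx' < α.length := by tauto
      have hy'α : jy' < α.length := by tauto
      rw [List.getElem?_append_left hx'α] at hjx'
      rw [List.getElem?_append_left hy'α] at hjy'
      rw [List.getElem?_append_right (by omega)] at hjx hjy
      have := lt_iff_lt_of_regularOrdered hro hjx' hjy' hjx hjy
      omega
  have := offset_add_length_img_le h hlt₂ (by tauto) hjx'
  simp only [img, Sum.elim_inr] at this
  omega

theorem exists_shorter_solution_of_offset_lt (h : V → List C) (hreg : Regular α β)
    (hsol : applySub h α = applySub h β) {x : V} (hc : (α ++ β).count (Sum.inr x) = 2)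
    {j j' : ℕ} (hj : (α ++ β)[j]? = some (Sum.inr x)) (hj' : (α ++ β)[j']? = some (Sum.inr x))
    (hside : ¬ (j < α.length ↔ j' < α.length)) (hlt : offset h α β j < offset h α β j')
    (hle : offset h α β j' ≤ offset h α β j + (h x).length) :
    ∃ g : V → List C, applySub g α = applySub g β ∧
      (applySub g α).length < (applySub h α).length := by
  obtain ⟨hcα, hcβ⟩ := count_eq_one_of_count_eq_two hreg hc
  by_cases hj'α : j' < α.length
  · have hjα : ¬ j < α.length := by tauto
    rw [List.getElem?_append_left hj'α] at hj'
    rw [List.getElem?_append_right (by omega)] at hj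
    simp only [offset, hjα, hj'α, if_true, if_false] at hlt hle
    exact exists_shorter_solution_of_shift h hsol hcα hcβ hj' hj
      (Δ := (applySub h (α.take j')).length - (applySub h (β.take (j - α.length))).length)
      (by omega) (by omega) (by omega)
  · have hjα : j < α.length := by tauto
    rw [List.getElem?_append_left hjα] at hj
    rw [List.getElem?_append_right (by omega)] at hj'
    simp only [offset, hjα, hj'α, if_true, if_false] at hlt hle
    obtain ⟨g, hg, hlen⟩ := exists_shorter_solution_of_shift h hsol.symm hcβ hcα hj' hj
      (Δ := (applySub h (β.take (j' - α.length))).length - (applySub h (α.take j)).length)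
      (by omega) (by omega) (by omega)
    exact ⟨g, hg.symm, by rwa [← hg, hsol]⟩

end Regular

section Sequence

variable {C V : Type} [DecidableEq C] [DecidableEq V] {α β : List (C ⊕ V)} {h : V → List C}
  {p : Pos C V}

theorem corresponds_of_nextCorr_eq_some {q r : Pos C V} (hr : nextCorr α β h q = some r) :
    Corresponds α β h q r := by
  unfold nextCorr at hr
  split_ifs at hr with hq
  exact Option.some.inj hr ▸ hq.choose_spec.1

theorem seqS_add_two_eq_some {n : ℕ} {r : Pos C V} (hr : seqS α β h p (n + 2) = some r) :
    ∃ (q : Pos C V) (x : V), seqS α β h p (n + 1) = some q ∧ q.1 = Sum.inr x ∧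
      (α ++ β).count (Sum.inr x) = 2 ∧ Corresponds α β h (q.1, flipz q.2.1, q.2.2) r := by
  rw [seqS] at hr
  rcases hq : seqS α β h p (n + 1) with _ | ⟨s, z, d⟩
  · simp [hq] at hr
  rw [hq] at hr
  cases s with
  | inl a => simp at hr
  | inr x =>
    simp only at hr
    split_ifs at hr with hc
    exact ⟨_, x, rfl, rfl, hc, corresponds_of_nextCorr_eq_some hr⟩

theorem exists_seqS_eq_some_of_le {m n : ℕ} (hmn : m ≤ n) {r : Pos C V}
    (hr : seqS α β h p n = some r) : ∃ q, seqS α β h p m = some q := by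
  induction n generalizing r with
  | zero => exact ⟨r, Nat.le_zero.1 hmn ▸ hr⟩
  | succ n ih =>
    rcases hmn.eq_or_lt with rfl | hlt
    · exact ⟨r, hr⟩
    cases n with
    | zero => exact ⟨p, by rw [show m = 0 by omega]; rfl⟩
    | succ n =>
      obtain ⟨q, -, hq, -⟩ := seqS_add_two_eq_some hr
      exact ih (by omega) hq

theorem seqS_validPos_and_isOcc {n : ℕ} (hn : 1 ≤ n) {r : Pos C V}
    (hr : seqS α β h p n = some r) : ValidPos α β h r ∧ ∃ j, IsOcc (α ++ β) r.1 r.2.1 j := by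
  have hcorr : ∃ q, Corresponds α β h q r := by
    obtain ⟨n, rfl⟩ := Nat.exists_eq_add_of_le' hn
    cases n with
    | zero => exact ⟨p, corresponds_of_nextCorr_eq_some hr⟩
    | succ n =>
      obtain ⟨q, -, -, -, -, hqr⟩ := seqS_add_two_eq_some hr
      exact ⟨_, hqr⟩
  obtain ⟨q, -, hv, -, j, -, hj, -⟩ := hcorr
  exact ⟨hv, j, hj⟩

/-- Each step jumps to the other side and corresponds back, so the entries after `p` are all read
on the side opposite to `p`. -/
theorem seqS_side_ne (hreg : Regular α β) {jp : ℕ} (hp : IsOcc (α ++ β) p.1 p.2.1 jp) {n : ℕ}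
    (hn : 1 ≤ n) {r : Pos C V} {j : ℕ} (hr : seqS α β h p n = some r)
    (hj : IsOcc (α ++ β) r.1 r.2.1 j) : ¬ (j < α.length ↔ jp < α.length) := by
  obtain ⟨n, rfl⟩ := Nat.exists_eq_add_of_le' hn
  clear hn
  induction n generalizing r j with
  | zero =>
    obtain ⟨-, -, jq, jr, hjq, hjr, hside, -⟩ := corresponds_of_nextCorr_eq_some hr
    rw [hp.unique hjq, hj.unique hjr]
    tauto
  | succ n ih =>
    obtain ⟨q, x, hq, hx, hc, -, -, jf, jr, hjf, hjr, hside, -⟩ := seqS_add_two_eq_some hr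
    obtain ⟨-, jq, hjq⟩ := seqS_validPos_and_isOcc (by omega) hq
    have ihq := ih hjq hq
    rw [hx] at hjq hjf
    have := isOcc_flipz_side hreg hc hjq hjf
    rw [hj.unique hjr]
    tauto

theorem seqS_side_iff (hreg : Regular α β) {n m : ℕ} (hn : 1 ≤ n) (hm : 1 ≤ m)
    {r r' : Pos C V} {j j' : ℕ} (hr : seqS α β h p n = some r)
    (hr' : seqS α β h p m = some r') (hj : IsOcc (α ++ β) r.1 r.2.1 j)
    (hj' : IsOcc (α ++ β) r'.1 r'.2.1 j') : j < α.length ↔ j' < α.length := by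
  obtain ⟨q, hq⟩ := exists_seqS_eq_some_of_le hn hr
  obtain ⟨-, -, jp, -, hjp, -⟩ := corresponds_of_nextCorr_eq_some hq
  have := seqS_side_ne hreg hjp hn hr hj
  have := seqS_side_ne hreg hjp hm hr' hj'
  tauto

/-- Entry `n` of `S_p` sits at letter `τ` (counted from 1) of the common solution word. -/
def EntryLetter (α β : List (C ⊕ V)) (h : V → List C) (p : Pos C V) (n τ : ℕ) : Prop :=
  ∃ (r : Pos C V) (j : ℕ), seqS α β h p n = some r ∧ IsOcc (α ++ β) r.1 r.2.1 j ∧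
    offset h α β j + r.2.2 = τ

theorem EntryLetter.unique {n τ τ' : ℕ} (hτ : EntryLetter α β h p n τ)
    (hτ' : EntryLetter α β h p n τ') : τ = τ' := by
  obtain ⟨r, j, hr, hj, rfl⟩ := hτ
  obtain ⟨r', j', hr', hj', rfl⟩ := hτ'
  obtain rfl := Option.some.inj (hr.symm.trans hr')
  rw [hj.unique hj']

theorem exists_entryLetter_of_le {m n τ : ℕ} (hm : 1 ≤ m) (hmn : m ≤ n)
    (hτ : EntryLetter α β h p n τ) : ∃ τ', EntryLetter α β h p m τ' := by
  obtain ⟨r, -, hr, -⟩ := hτ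
  obtain ⟨q, hq⟩ := exists_seqS_eq_some_of_le hmn hr
  obtain ⟨-, j, hj⟩ := seqS_validPos_and_isOcc hm hq
  exact ⟨_, q, j, hq, hj, rfl⟩

theorem seqS_step_spec (hreg : Regular α β) {n : ℕ} (hn : 1 ≤ n) {r : Pos C V}
    (hr : seqS α β h p (n + 1) = some r) :
    ∃ (x : V) (z d j j' : ℕ), seqS α β h p n = some (Sum.inr x, z, d) ∧
      (α ++ β).count (Sum.inr x) = 2 ∧ d ≤ (h x).length ∧
      IsOcc (α ++ β) (Sum.inr x) z j ∧ (α ++ β)[j']? = some (Sum.inr x) ∧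
      ¬ (j < α.length ↔ j' < α.length) ∧ EntryLetter α β h p (n + 1) (offset h α β j' + d) := by
  obtain ⟨n, rfl⟩ := Nat.exists_eq_add_of_le' hn
  obtain ⟨⟨s, z, d⟩, x, hq, rfl, hc, -, -, j', jr, hj', hjr, -, heq⟩ := seqS_add_two_eq_some hr
  obtain ⟨⟨-, -, -, hdx⟩, j, hj⟩ := seqS_validPos_and_isOcc (by omega) hq
  exact ⟨x, z, d, j, j', hq, hc, hdx, hj, hj'.1, isOcc_flipz_side hreg hc hj hj',
    r, jr, hr, hjr, heq.symm⟩

theorem entryLetter_succ_lt (hro : RegularOrdered α β) {n m a b a' b' : ℕ} (hn : 1 ≤ n)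
    (hm : 1 ≤ m) (ha : EntryLetter α β h p n a) (hb : EntryLetter α β h p m b)
    (ha' : EntryLetter α β h p (n + 1) a') (hb' : EntryLetter α β h p (m + 1) b')
    (hab : a < b) : a' < b' := by
  obtain ⟨r, -, hr, -⟩ := id ha'
  obtain ⟨s, -, hs, -⟩ := id hb'
  obtain ⟨x, z, d, jx, jx', hx, -, hdx, hjx, hjx', hsx, hxa'⟩ := seqS_step_spec hro.1 hn hr
  obtain ⟨y, w, e, jy, jy', hy, -, hey, hjy, hjy', hsy, hyb'⟩ := seqS_step_spec hro.1 hm hs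
  have he : 1 ≤ e := (seqS_validPos_and_isOcc hm hy).1.2.2.1
  have hxa := EntryLetter.unique (τ := offset h α β jx + d) ⟨_, jx, hx, hjx, rfl⟩ ha
  have hyb := EntryLetter.unique (τ := offset h α β jy + e) ⟨_, jy, hy, hjy, rfl⟩ hb
  have := offset_add_lt_offset_add_of_flip h hro hjx.1 hjx' hjy.1 hjy'
    (seqS_side_iff hro.1 hn hm hx hy hjx hjy) hsx hsy hdx he hey (by omega)
  rw [← hxa'.unique ha', ← hyb'.unique hb']
  exact this

theorem entryLetter_le_of_succ_lt (hro : RegularOrdered α β) {i k a b c : ℕ} (hi : 1 ≤ i)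
    (ha : EntryLetter α β h p i a) (hb : EntryLetter α β h p (i + 1) b) (hba : b < a)
    (hk : i + 1 ≤ k) (hc : EntryLetter α β h p k c) : c ≤ b := by
  induction k, hk using Nat.le_induction generalizing c with
  | base => exact (hc.unique hb).le
  | succ k hk ih =>
    obtain ⟨c', hc'⟩ := exists_entryLetter_of_le (by omega) k.le_succ hc
    exact (entryLetter_succ_lt hro (by omega) hi hc' ha hc hb ((ih hc').trans_lt hba)).le

theorem le_entryLetter_of_lt_succ (hro : RegularOrdered α β) {i k a b c : ℕ} (hi : 1 ≤ i)
    (ha : EntryLetter α β h p i a) (hb : EntryLetter α β h p (i + 1) b) (hab : a < b)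
    (hk : i + 1 ≤ k) (hc : EntryLetter α β h p k c) : b ≤ c := by
  induction k, hk using Nat.le_induction generalizing c with
  | base => exact (hb.unique hc).le
  | succ k hk ih =>
    obtain ⟨c', hc'⟩ := exists_entryLetter_of_le (by omega) k.le_succ hc
    exact (entryLetter_succ_lt hro hi (by omega) ha hc' hb hc (hab.trans_le (ih hc'))).le

theorem aligned_of_seqS_eq_some (hro : RegularOrdered α β) (hsol : applySub h α = applySub h β)
    (hmin : ∀ g : V → List C, applySub g α = applySub g β →
      (applySub h α).length ≤ (applySub g α).length)
    {i j : ℕ} (hi : 1 ≤ i) (hij : i < j) {x : V} {z d z' d' : ℕ}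
    (hi' : seqS α β h p i = some (Sum.inr x, z, d))
    (hj' : seqS α β h p j = some (Sum.inr x, z', d')) : Aligned α β h x := by
  obtain ⟨r, hr⟩ := exists_seqS_eq_some_of_le hij hj'
  obtain ⟨x₀, z₀, d₀, jB, jA, hi₀, hc, hdx, hjB, hjA, hside, hA⟩ := seqS_step_spec hro.1 hi hr
  obtain ⟨rfl, rfl, rfl⟩ : x = x₀ ∧ z = z₀ ∧ d = d₀ := by simpa using hi'.symm.trans hi₀
  obtain ⟨⟨-, -, hd', hd'x⟩, jC, hjC⟩ := seqS_validPos_and_isOcc (by omega) hj'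
  obtain rfl : jC = jB := eq_of_getElem?_eq_inr_of_side hro.1 hjC.1 hjB.1
    (seqS_side_iff hro.1 (by omega) hi hj' hi₀ hjC hjB)
  have hB : EntryLetter α β h p i (offset h α β jC + d) := ⟨_, jC, hi₀, hjB, rfl⟩
  have hJ : EntryLetter α β h p j (offset h α β jC + d') := ⟨_, jC, hj', hjC, rfl⟩
  simp only [img, Sum.elim_inr] at hd'x
  refine ⟨jA, jC, hjA, hjB.1, fun hs => hside hs.symm, ?_⟩
  by_contra hne
  rcases lt_or_gt_of_ne hne with hlt | hlt
  · have := entryLetter_le_of_succ_lt hro hi hB hA (by omega) hij hJ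
    obtain ⟨g, hg, hlen⟩ := exists_shorter_solution_of_offset_lt h hro.1 hsol hc hjA hjB.1
      (fun hs => hside hs.symm) hlt (by omega)
    exact absurd (hmin g hg) (not_le.2 hlen)
  · have := le_entryLetter_of_lt_succ hro hi hB hA (by omega) hij hJ
    obtain ⟨g, hg, hlen⟩ := exists_shorter_solution_of_offset_lt h hro.1 hsol hc hjB.1 hjA
      hside hlt (by omega)
    exact absurd (hmin g hg) (not_le.2 hlen)

theorem Aligned.count_ne_one {x : V} (hx : Aligned α β h x) :
    (α ++ β).count (Sum.inr x) ≠ 1 := by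
  obtain ⟨j, j', hj, hj', hside, -⟩ := hx
  intro hc
  obtain rfl := List.eq_of_getElem?_eq_of_count_le_one hc.le hj hj'
  exact hside Iff.rfl

theorem Corresponds.fst_eq_of_aligned (hreg : Regular α β) {x : V} (hx : Aligned α β h x)
    {q r : Pos C V} (hqr : Corresponds α β h q r) (hr : r.1 = Sum.inr x) : q.1 = Sum.inr x := by
  obtain ⟨⟨-, -, hdq, hdq'⟩, ⟨-, -, hdr, hdr'⟩, jq, jr, hjq, hjr, hside, heq⟩ := hqr
  obtain ⟨jA, jB, hjA, hjB, hAB, hoff⟩ := hx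
  rw [hr] at hjr hdr'
  wlog hrA : jr < α.length ↔ jA < α.length generalizing jA jB
  · exact this jB jA hjB hjA (by tauto) hoff.symm (by tauto)
  obtain rfl := eq_of_getElem?_eq_inr_of_side hreg hjr.1 hjA hrA
  obtain rfl : jq = jB := eq_of_offset_add_eq h hjq.1 hjB (by tauto) hdq hdq' hdr hdr'
    (by rw [heq, hoff])
  simpa using hjq.1.symm.trans hjB

/-- Going backwards along `S_p`, an entry inside the aligned copies of `h x` can only come from
another one, and ultimately from `p`. -/
theorem seqS_fst_ne_of_aligned (hreg : Regular α β) (hp : SingleOrConst α β p.1) {x : V}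
    (hx : Aligned α β h x) {n : ℕ} (hn : 1 ≤ n) {r : Pos C V} (hr : seqS α β h p n = some r) :
    r.1 ≠ Sum.inr x := by
  obtain ⟨n, rfl⟩ := Nat.exists_eq_add_of_le' hn
  clear hn
  induction n generalizing r with
  | zero =>
    intro hrx
    have hpx := (corresponds_of_nextCorr_eq_some hr).fst_eq_of_aligned hreg hx hrx
    rcases hp with ⟨a, ha⟩ | hc
    · rw [hpx] at ha
      cases ha
    · exact hx.count_ne_one (hpx ▸ hc)
  | succ n ih =>
    intro hrx
    obtain ⟨q, -, hq, -, -, hqr⟩ := seqS_add_two_eq_some hr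
    exact ih hq (hqr.fst_eq_of_aligned hreg hx hrx)

theorem seqS_fst_ne_of_count_eq_one (hreg : Regular α β) (hp : (α ++ β).count p.1 = 1) {n : ℕ}
    (hn : 1 ≤ n) {r : Pos C V} (hr : seqS α β h p n = some r) : r.1 ≠ p.1 := by
  intro hrp
  obtain ⟨q, hq⟩ := exists_seqS_eq_some_of_le hn hr
  obtain ⟨-, -, jp, -, hjp, -⟩ := corresponds_of_nextCorr_eq_some hq
  obtain ⟨-, j, hj⟩ := seqS_validPos_and_isOcc hn hr
  obtain rfl := List.eq_of_getElem?_eq_of_count_le_one hp.le (hrp ▸ hj.1) hjp.1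
  exact seqS_side_ne hreg hjp hn hr hj Iff.rfl

end Sequence

end WEq

open WEq in
theorem stmt11_general (C V : Type) [DecidableEq C] [DecidableEq V]
    (α β : List (C ⊕ V)) (h : V → List C)
    (hro : RegularOrdered α β)
    (hsol : applySub h α = applySub h β)
    (hmin : ∀ g : V → List C, applySub g α = applySub g β →
      (applySub h α).length ≤ (applySub g α).length)
    (p : Pos C V) (hp : SingleOrConst α β p.1)
    (i j : ℕ) (hij : i < j) (x : V) (z d z' d' : ℕ)
    (hi : seqS α β h p i = some (Sum.inr x, z, d))
    (hj : seqS α β h p j = some (Sum.inr x, z', d')) :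
    False := by
  rcases Nat.eq_zero_or_pos i with rfl | hi₀
  · obtain rfl : p = (Sum.inr x, z, d) := Option.some.inj hi
    have hc : (α ++ β).count (Sum.inr x) = 1 := hp.resolve_left (by rintro ⟨a, ⟨⟩⟩)
    exact seqS_fst_ne_of_count_eq_one hro.1 hc hij hj rfl
  · exact seqS_fst_ne_of_aligned hro.1 hp (aligned_of_seqS_eq_some hro hsol hmin hi₀ hij hi hj)
      (by omega) hj rfl

open WEq in
theorem stmt11 (C V : Type) [DecidableEq C] [DecidableEq V]
    (α β : List (C ⊕ V)) (h : V → List C)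
    (hro : RegularOrdered α β)
    (hsol : applySub h α = applySub h β)
    (hmin : ∀ g : V → List C, applySub g α = applySub g β →
      (applySub h α).length ≤ (applySub g α).length)
    (p : Pos C V) (hp : SingleOrConst α β p.1) (hpv : ValidPos α β h p)
    (i j : ℕ) (hij : i < j) (x : V) (z d z' d' : ℕ)
    (hi : seqS α β h p i = some (Sum.inr x, z, d))
    (hj : seqS α β h p j = some (Sum.inr x, z', d')) :
    False :=
  stmt11_general C V α β h hro hsol hmin p hp i j hij x z d z' d' hi hj
end
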